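/- arXiv:1906.10615 — 2 statements merged into one kernel-verified Lean document; each statement's English description precedes it below -/
import Mathlib

section
/- (Grothendieck's identity) If (X, Y) is a centered two-dimensional Gaussian vector with E[X²] = E[Y²] = 1 and E[XY] = ρ ∈ [-1,1], then E[sign(X)·sign(Y)] = (2/π)·arcsin(ρ). -/
/-! In polar coordinates the standard Gaussian on `ℝ²` has uniform angle, and
`sign x · sign (ρ x + √(1 - ρ²) y)` depends only on the angle `θ`: it equals
`sign (cos θ) · sign (cos (θ - α))` with `α = arccos ρ`. The two signs disagree exactly on two
arcs of length `α`, so the expectation is `1 - 2α/π = (2/π) arcsin ρ`. -/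

open MeasureTheory ProbabilityTheory Real Set

namespace Real

@[fun_prop]
lemma measurable_sign : Measurable Real.sign :=
  Measurable.ite measurableSet_Iio measurable_const
    (Measurable.ite measurableSet_Ioi measurable_const measurable_const)

lemma abs_sign_le_one (x : ℝ) : |Real.sign x| ≤ 1 := by
  rcases sign_apply_eq x with h | h | h <;> simp [h]

lemma sign_mul_of_pos {r : ℝ} (hr : 0 < r) (x : ℝ) : Real.sign (r * x) = Real.sign x := by
  rcases lt_trichotomy x 0 with h | rfl | h
  · rw [sign_of_neg h, sign_of_neg (mul_neg_of_pos_of_neg hr h)]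
  · simp
  · rw [sign_of_pos h, sign_of_pos (mul_pos hr h)]

end Real

lemma ProbabilityTheory.IndepFun.integral_comp_prodMk {Ω α β E : Type*} [MeasurableSpace Ω]
    [MeasurableSpace α] [MeasurableSpace β] [NormedAddCommGroup E] [NormedSpace ℝ E]
    {P : Measure Ω} [IsFiniteMeasure P] {X : Ω → α} {Y : Ω → β}
    (hX : AEMeasurable X P) (hY : AEMeasurable Y P) (hXY : IndepFun X Y P) {f : α × β → E}
    (hf : AEStronglyMeasurable f ((P.map X).prod (P.map Y))) :
    ∫ ω, f (X ω, Y ω) ∂P = ∫ p, f p ∂(P.map X).prod (P.map Y) := by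
  rw [← (indepFun_iff_map_prod_eq_prod_map_map hX hY).mp hXY] at hf ⊢
  exact (integral_map (hX.prodMk hY) hf).symm

lemma integral_Ioi_mul_exp_neg_sq_div_two : ∫ r in Ioi (0 : ℝ), r * exp (-r ^ 2 / 2) = 1 := by
  have h := integral_rpow_mul_exp_neg_mul_rpow (p := 2) (q := 1) (b := 1 / 2) (by norm_num)
    (by norm_num) (by norm_num)
  norm_num at h
  convert h using 3 with r
  ring_nf

lemma integral_gaussianReal_prod_gaussianReal_eq_integral_smul {E : Type*}
    [NormedAddCommGroup E] [NormedSpace ℝ E]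
    (m₁ m₂ : ℝ) {v₁ v₂ : NNReal} (hv₁ : v₁ ≠ 0) (hv₂ : v₂ ≠ 0) (f : ℝ × ℝ → E) :
    ∫ p, f p ∂(gaussianReal m₁ v₁).prod (gaussianReal m₂ v₂) =
      ∫ p, (gaussianPDFReal m₁ v₁ p.1 * gaussianPDFReal m₂ v₂ p.2) • f p := by
  rw [gaussianReal_of_var_ne_zero _ hv₁, gaussianReal_of_var_ne_zero _ hv₂,
    prod_withDensity (measurable_gaussianPDF _ _) (measurable_gaussianPDF _ _),
    integral_withDensity_eq_integral_toReal_smul (by fun_prop)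
      (ae_of_all _ fun _ => ENNReal.mul_lt_top gaussianPDF_lt_top gaussianPDF_lt_top),
    ← Measure.volume_eq_prod]
  simp only [ENNReal.toReal_mul, toReal_gaussianPDF]

lemma gaussianPDFReal_mul_gaussianPDFReal (x y : ℝ) :
    gaussianPDFReal 0 1 x * gaussianPDFReal 0 1 y = (2 * π)⁻¹ * exp (-(x ^ 2 + y ^ 2) / 2) := by
  simp only [gaussianPDFReal, NNReal.coe_one, mul_one, sub_zero]
  rw [mul_mul_mul_comm, ← exp_add, ← mul_inv, mul_self_sqrt (by positivity)]
  ring_nf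

lemma integral_gaussianReal_prod_gaussianReal_of_scale_invariant {E : Type*}
    [NormedAddCommGroup E] [NormedSpace ℝ E] (f : ℝ × ℝ → E)
    (hf : ∀ r : ℝ, 0 < r → ∀ p, f (r • p) = f p) :
    ∫ p, f p ∂(gaussianReal 0 1).prod (gaussianReal 0 1) =
      (2 * π)⁻¹ • ∫ θ in -π..π, f (cos θ, sin θ) := by
  have hpolar : EqOn (fun p : ℝ × ℝ => p.1 • (gaussianPDFReal 0 1 (polarCoord.symm p).1 *
        gaussianPDFReal 0 1 (polarCoord.symm p).2) • f (polarCoord.symm p))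
      (fun p => ((2 * π)⁻¹ * (p.1 * exp (-p.1 ^ 2 / 2))) • f (cos p.2, sin p.2))
      (Ioi 0 ×ˢ Ioo (-π) π) := by
    rintro ⟨r, θ⟩ ⟨hr, -⟩
    have hsymm : polarCoord.symm (r, θ) = r • (cos θ, sin θ) := by simp [polarCoord_symm_apply]
    simp only [hsymm, hf r hr, Prod.smul_fst, Prod.smul_snd, smul_eq_mul,
      gaussianPDFReal_mul_gaussianPDFReal, smul_smul]
    congr 1
    rw [show (r * cos θ) ^ 2 + (r * sin θ) ^ 2 = r ^ 2 by
      linear_combination r ^ 2 * sin_sq_add_cos_sq θ]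
    ring
  rw [integral_gaussianReal_prod_gaussianReal_eq_integral_smul 0 0 one_ne_zero one_ne_zero,
    ← integral_comp_polarCoord_symm, polarCoord_target,
    setIntegral_congr_fun (measurableSet_Ioi.prod measurableSet_Ioo) hpolar,
    Measure.volume_eq_prod, ← Measure.prod_restrict,
    integral_prod_smul (fun r => (2 * π)⁻¹ * (r * exp (-r ^ 2 / 2))) (fun θ => f (cos θ, sin θ)),
    integral_const_mul, integral_Ioi_mul_exp_neg_sq_div_two, mul_one,
    intervalIntegral.integral_of_le (by linarith [pi_pos]), integral_Ioc_eq_integral_Ioo]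

lemma intervalIntegral.integral_of_eqOn_Ioo_const {f : ℝ → ℝ} {a b c : ℝ} (hab : a ≤ b)
    (hf : EqOn f (fun _ => c) (Ioo a b)) : ∫ x in a..b, f x = (b - a) * c := by
  rw [intervalIntegral.integral_congr_Ioo_of_le hab hf, intervalIntegral.integral_const,
    smul_eq_mul]

lemma integral_sign_cos_mul_sign_cos_sub {α : ℝ} (h0 : 0 ≤ α) (hπ : α ≤ π) :
    ∫ θ in -π..π, Real.sign (cos θ) * Real.sign (cos (θ - α)) = 2 * π - 4 * α := by
  set f : ℝ → ℝ := fun θ => Real.sign (cos θ) * Real.sign (cos (θ - α))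
  have hpi := pi_pos
  have hper : Function.Periodic f π := fun θ => by
    simp only [f, show θ + π - α = θ - α + π by ring, cos_add_pi, Real.sign_neg, neg_mul_neg]
  have hint : ∀ a b, IntervalIntegrable f volume a b := fun a b =>
    (intervalIntegrable_const (c := (1 : ℝ))).mono_fun'
      (by fun_prop : Measurable f).aestronglyMeasurable (ae_of_all _ fun θ => by
        simpa only [f, norm_mul, Real.norm_eq_abs] using
          mul_le_one₀ (Real.abs_sign_le_one _) (abs_nonneg _) (Real.abs_sign_le_one _))
  -- on `(-π/2, π/2)` only `cos (θ - α)` changes sign, at `α - π/2`; then use the period `π`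
  have hneg : ∫ θ in -(π / 2)..α - π / 2, f θ = (α - π / 2 - -(π / 2)) * (-1) :=
    intervalIntegral.integral_of_eqOn_Ioo_const (by linarith) fun θ ⟨h₁, h₂⟩ => by
      have hcos : cos (θ - α) < 0 := by
        rw [← cos_neg]; exact cos_neg_of_pi_div_two_lt_of_lt (by linarith) (by linarith)
      simp [f, Real.sign_of_pos (cos_pos_of_mem_Ioo ⟨h₁, by linarith⟩), Real.sign_of_neg hcos]
  have hpos : ∫ θ in α - π / 2..π / 2, f θ = (π / 2 - (α - π / 2)) * 1 :=
    intervalIntegral.integral_of_eqOn_Ioo_const (by linarith) fun θ ⟨h₁, h₂⟩ => by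
      simp [f, Real.sign_of_pos (cos_pos_of_mem_Ioo ⟨by linarith, h₂⟩),
        Real.sign_of_pos (cos_pos_of_mem_Ioo ⟨by linarith, by linarith⟩ : 0 < cos (θ - α))]
  have htwo : ∫ θ in -π..π, f θ = 2 * ∫ θ in -(π / 2)..π / 2, f θ := by
    have h := hper.intervalIntegral_add_zsmul_eq 2 (-π) hint
    rw [hper.intervalIntegral_add_eq (-π) (-(π / 2)), zsmul_eq_mul, zsmul_eq_mul] at h
    push_cast at h
    rwa [show -π + 2 * π = π by ring, show -(π / 2) + π = π / 2 by ring] at h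
  rw [htwo, ← intervalIntegral.integral_add_adjacent_intervals (hint _ _) (hint _ _), hneg, hpos]
  ring

/-- Grothendieck's identity: if `(X, Y)` is a centered two-dimensional
Gaussian vector with unit variances and correlation `ρ ∈ [-1,1]`, realized as
`X = γ₁`, `Y = ρ·γ₁ + √(1-ρ²)·γ₂` for independent standard Gaussians `γ₁, γ₂`,
then `E[sign(X)·sign(Y)] = (2/π)·arcsin(ρ)`. -/
theorem grothendieck_identity {Ω : Type*} [MeasurableSpace Ω]
    (P : Measure Ω) [IsProbabilityMeasure P]
    (γ₁ γ₂ : Ω → ℝ) (hγ₁ : Measurable γ₁) (hγ₂ : Measurable γ₂)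
    (h₁ : Measure.map γ₁ P = gaussianReal 0 1)
    (h₂ : Measure.map γ₂ P = gaussianReal 0 1)
    (hind : IndepFun γ₁ γ₂ P)
    (ρ : ℝ) (hρ : ρ ∈ Set.Icc (-1 : ℝ) 1) :
    ∫ ω, Real.sign (γ₁ ω) *
        Real.sign (ρ * γ₁ ω + Real.sqrt (1 - ρ ^ 2) * γ₂ ω) ∂P =
      2 / Real.pi * Real.arcsin ρ := by
  set F : ℝ × ℝ → ℝ := fun p => Real.sign p.1 * Real.sign (ρ * p.1 + √(1 - ρ ^ 2) * p.2)
  have hF : Measurable F := by fun_prop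
  have hscale : ∀ r : ℝ, 0 < r → ∀ p, F (r • p) = F p := fun r hr p => by
    simp only [F, Prod.smul_fst, Prod.smul_snd, smul_eq_mul,
      show ∀ x y, ρ * (r * x) + √(1 - ρ ^ 2) * (r * y) = r * (ρ * x + √(1 - ρ ^ 2) * y) by
        intros; ring, Real.sign_mul_of_pos hr]
  have hangle : ∀ θ, F (cos θ, sin θ) = Real.sign (cos θ) * Real.sign (cos (θ - arccos ρ)) :=
    fun θ => by simp only [F, cos_sub, cos_arccos hρ.1 hρ.2, sin_arccos, mul_comm]
  have hlaw := hind.integral_comp_prodMk hγ₁.aemeasurable hγ₂.aemeasurable hF.aestronglyMeasurable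
  rw [h₁, h₂] at hlaw
  calc _ = ∫ p, F p ∂(gaussianReal 0 1).prod (gaussianReal 0 1) := hlaw
    _ = (2 * π)⁻¹ * ∫ θ in -π..π, F (cos θ, sin θ) :=
      integral_gaussianReal_prod_gaussianReal_of_scale_invariant F hscale
    _ = (2 * π)⁻¹ * (2 * π - 4 * arccos ρ) := by
      simp only [hangle, integral_sign_cos_mul_sign_cos_sub (arccos_nonneg ρ) (arccos_le_pi ρ)]
    _ = 2 / π * arcsin ρ := by
      rw [arcsin_eq_pi_div_two_sub_arccos]
      field_simp
      ring
end

section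
/- If γ₁, γ₂ are independent standard Gaussian random variables and ρ ∈ [-1,1], then P[γ₁ > 0 and ρ·γ₁ + √(1-ρ²)·γ₂ > 0] = 1/4 + arcsin(ρ)/(2π). -/
/-!
Write `ρ = cos α` with `α = arccos ρ ∈ [0, π]`, so that `√(1 - ρ²) = sin α`. By independence the
pair `(γ₁, γ₂)` has the density `(2π)⁻¹ exp (-(x² + y²) / 2)`, which depends only on the radius,
and the event says that it lies in the intersection of the half-planes `x > 0` and
`x cos α + y sin α > 0`: the wedge of polar angles `θ ∈ (α - π/2, π/2)`. In polar coordinates the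
radial integral `∫ r exp (-r² / 2) dr` equals `1`, so the probability is the opening angle over
`2π`, that is `(π - α) / (2π) = 1/4 + arcsin ρ / (2π)`.
-/

open MeasureTheory ProbabilityTheory Real Set
open scoped NNReal

theorem integral_mul_exp_neg_mul_sq {b : ℝ} (hb : 0 < b) :
    ∫ r in Ioi (0 : ℝ), r * rexp (-b * r ^ 2) = (2 * b)⁻¹ := by
  have hcomplex := integral_mul_cexp_neg_mul_sq (b := (b : ℂ)) (by simpa using hb)
  have hcast : ((∫ r in Ioi (0 : ℝ), r * rexp (-b * r ^ 2) : ℝ) : ℂ) = (((2 * b)⁻¹ : ℝ) : ℂ) := by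
    rw [← integral_complex_ofReal]; push_cast; exact hcomplex
  exact_mod_cast hcast

theorem gaussianReal_prod_gaussianReal (μ₁ μ₂ : ℝ) {v₁ v₂ : ℝ≥0} (hv₁ : v₁ ≠ 0) (hv₂ : v₂ ≠ 0) :
    (gaussianReal μ₁ v₁).prod (gaussianReal μ₂ v₂) =
      volume.withDensity fun p ↦
        ENNReal.ofReal (gaussianPDFReal μ₁ v₁ p.1 * gaussianPDFReal μ₂ v₂ p.2) := by
  rw [gaussianReal_of_var_ne_zero μ₁ hv₁, gaussianReal_of_var_ne_zero μ₂ hv₂,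
    prod_withDensity (measurable_gaussianPDF μ₁ v₁) (measurable_gaussianPDF μ₂ v₂),
    ← Measure.volume_eq_prod]
  congr with p
  rw [ENNReal.ofReal_mul (gaussianPDFReal_nonneg μ₁ v₁ p.1)]
  rfl

theorem measureReal_gaussianReal_prod (μ₁ μ₂ : ℝ) {v₁ v₂ : ℝ≥0} (hv₁ : v₁ ≠ 0) (hv₂ : v₂ ≠ 0)
    (S : Set (ℝ × ℝ)) :
    ((gaussianReal μ₁ v₁).prod (gaussianReal μ₂ v₂)).real S =
      ∫ p in S, gaussianPDFReal μ₁ v₁ p.1 * gaussianPDFReal μ₂ v₂ p.2 := by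
  rw [gaussianReal_prod_gaussianReal μ₁ μ₂ hv₁ hv₂, measureReal_def, withDensity_apply' _ S,
    integral_eq_lintegral_of_nonneg_ae]
  · exact .of_forall fun p ↦
      mul_nonneg (gaussianPDFReal_nonneg _ _ _) (gaussianPDFReal_nonneg _ _ _)
  · fun_prop

theorem gaussianPDFReal_mul_gaussianPDFReal_polar (v : ℝ≥0) (r θ : ℝ) :
    gaussianPDFReal 0 v (r * cos θ) * gaussianPDFReal 0 v (r * sin θ) =
      (2 * π * v)⁻¹ * rexp (-(2 * (v : ℝ))⁻¹ * r ^ 2) := by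
  have h2πv : (0 : ℝ) ≤ 2 * π * v := by positivity
  simp only [gaussianPDFReal, sub_zero]
  rw [mul_mul_mul_comm, ← mul_inv, mul_self_sqrt h2πv, ← exp_add]
  congr 2
  linear_combination (-(r ^ 2) / (2 * v)) * sin_sq_add_cos_sq θ

theorem measureReal_gaussianReal_prod_of_cone {v : ℝ≥0} (hv : v ≠ 0) {S : Set (ℝ × ℝ)}
    (hS : MeasurableSet S) {A : Set ℝ} (hA : MeasurableSet A) (hAπ : A ⊆ Ioo (-π) π)
    (hSA : ∀ r θ, 0 < r → θ ∈ Ioo (-π) π → (polarCoord.symm (r, θ) ∈ S ↔ θ ∈ A)) :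
    ((gaussianReal 0 v).prod (gaussianReal 0 v)).real S = volume.real A / (2 * π) := by
  have hpolar : EqOn
      (fun p : ℝ × ℝ ↦ p.1 • S.indicator (fun q ↦ gaussianPDFReal 0 v q.1 * gaussianPDFReal 0 v q.2)
        (polarCoord.symm p))
      (fun p ↦ p.1 * rexp (-(2 * (v : ℝ))⁻¹ * p.1 ^ 2) * ((2 * π * v)⁻¹ * A.indicator 1 p.2))
      polarCoord.target := by
    rintro ⟨r, θ⟩ ⟨hr, hθ⟩
    dsimp only
    by_cases hθA : θ ∈ A
    · rw [indicator_of_mem ((hSA r θ hr hθ).2 hθA), indicator_of_mem hθA, polarCoord_symm_apply,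
        gaussianPDFReal_mul_gaussianPDFReal_polar, smul_eq_mul, Pi.one_apply]
      ring
    · rw [indicator_of_notMem (mt (hSA r θ hr hθ).1 hθA), indicator_of_notMem hθA]
      simp
  calc ((gaussianReal 0 v).prod (gaussianReal 0 v)).real S
      = ∫ p in polarCoord.target, p.1 • S.indicator
          (fun q ↦ gaussianPDFReal 0 v q.1 * gaussianPDFReal 0 v q.2) (polarCoord.symm p) := by
        rw [measureReal_gaussianReal_prod 0 0 hv hv, ← integral_indicator hS,
          integral_comp_polarCoord_symm]
    _ = (∫ r in Ioi (0 : ℝ), r * rexp (-(2 * (v : ℝ))⁻¹ * r ^ 2)) *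
          ∫ θ in Ioo (-π) π, (2 * π * v)⁻¹ * A.indicator 1 θ := by
        rw [setIntegral_congr_fun polarCoord.open_target.measurableSet hpolar, polarCoord_target,
          Measure.volume_eq_prod]
        exact setIntegral_prod_mul (fun r ↦ r * rexp (-(2 * (v : ℝ))⁻¹ * r ^ 2))
          (fun θ ↦ (2 * π * v)⁻¹ * A.indicator 1 θ) _ _
    _ = volume.real A / (2 * π) := by
        rw [integral_mul_exp_neg_mul_sq (by positivity), integral_const_mul,
          integral_indicator_one hA, measureReal_restrict_apply hA, inter_eq_left.2 hAπ]
        field_simp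

theorem cos_pos_iff_abs_lt {x : ℝ} (hx : |x| ≤ π + π / 2) : 0 < cos x ↔ |x| < π / 2 := by
  refine ⟨fun h ↦ ?_, fun h ↦ cos_pos_of_mem_Ioo (abs_lt.1 h)⟩
  by_contra! hx'
  exact h.not_ge (cos_abs x ▸ cos_nonpos_of_pi_div_two_le_of_le hx' hx)

theorem cos_pos_and_cos_sub_pos_iff {α θ : ℝ} (hα : α ∈ Icc 0 π) (hθ : θ ∈ Ioo (-π) π) :
    0 < cos θ ∧ 0 < cos (θ - α) ↔ θ ∈ Ioo (α - π / 2) (π / 2) := by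
  obtain ⟨hα₀, hαπ⟩ := hα
  obtain ⟨hθ₁, hθ₂⟩ := hθ
  have hπ := pi_pos
  constructor
  · rintro ⟨h₁, h₂⟩
    have h₁' := abs_lt.1 ((cos_pos_iff_abs_lt (abs_le.2 ⟨by linarith, by linarith⟩)).1 h₁)
    have h₂' := abs_lt.1 ((cos_pos_iff_abs_lt (abs_le.2 ⟨by linarith, by linarith⟩)).1 h₂)
    exact ⟨by linarith, h₁'.2⟩
  · rintro ⟨h₁, h₂⟩
    exact ⟨cos_pos_of_mem_Ioo ⟨by linarith, h₂⟩, cos_pos_of_mem_Ioo ⟨by linarith, by linarith⟩⟩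

def wedge (α : ℝ) : Set (ℝ × ℝ) := {p | 0 < p.1 ∧ 0 < cos α * p.1 + sin α * p.2}

theorem measurableSet_wedge (α : ℝ) : MeasurableSet (wedge α) :=
  (measurableSet_lt measurable_const measurable_fst).inter
    (measurableSet_lt measurable_const
      ((measurable_fst.const_mul _).add (measurable_snd.const_mul _)))

theorem polarCoord_symm_mem_wedge_iff {α r θ : ℝ} (hα : α ∈ Icc 0 π) (hr : 0 < r)
    (hθ : θ ∈ Ioo (-π) π) : polarCoord.symm (r, θ) ∈ wedge α ↔ θ ∈ Ioo (α - π / 2) (π / 2) := by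
  have hrot : cos α * (r * cos θ) + sin α * (r * sin θ) = r * cos (θ - α) := by
    rw [cos_sub]; ring
  rw [← cos_pos_and_cos_sub_pos_iff hα hθ, wedge, polarCoord_symm_apply, mem_ofPred_eq, hrot,
    mul_pos_iff_of_pos_left hr, mul_pos_iff_of_pos_left hr]

theorem measureReal_gaussianReal_prod_wedge {v : ℝ≥0} (hv : v ≠ 0) {α : ℝ} (hα : α ∈ Icc 0 π) :
    ((gaussianReal 0 v).prod (gaussianReal 0 v)).real (wedge α) = (π - α) / (2 * π) := by
  have hπ := pi_pos
  have hsub : Ioo (α - π / 2) (π / 2) ⊆ Ioo (-π) π :=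
    Ioo_subset_Ioo (by linarith [hα.1]) (by linarith)
  rw [measureReal_gaussianReal_prod_of_cone hv (measurableSet_wedge α) measurableSet_Ioo hsub
    (fun r θ hr hθ ↦ polarCoord_symm_mem_wedge_iff hα hr hθ),
    volume_real_Ioo_of_le (by linarith [hα.2])]
  ring_nf

/-- if `γ₁, γ₂` are independent standard Gaussian random variables and
`ρ ∈ [-1,1]`, then `P[γ₁ > 0 and ρ·γ₁ + √(1-ρ²)·γ₂ > 0] = 1/4 + arcsin(ρ)/(2π)`. -/
theorem gaussian_quadrant_probability {Ω : Type*} [MeasurableSpace Ω]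
    (P : Measure Ω) [IsProbabilityMeasure P]
    (γ₁ γ₂ : Ω → ℝ) (hγ₁ : Measurable γ₁) (hγ₂ : Measurable γ₂)
    (h₁ : Measure.map γ₁ P = gaussianReal 0 1)
    (h₂ : Measure.map γ₂ P = gaussianReal 0 1)
    (hind : IndepFun γ₁ γ₂ P)
    (ρ : ℝ) (hρ : ρ ∈ Set.Icc (-1 : ℝ) 1) :
    (P {ω | 0 < γ₁ ω ∧ 0 < ρ * γ₁ ω + Real.sqrt (1 - ρ ^ 2) * γ₂ ω}).toReal =
      1 / 4 + Real.arcsin ρ / (2 * Real.pi) := by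
  have hlaw : P.map (fun ω ↦ (γ₁ ω, γ₂ ω)) = (gaussianReal 0 1).prod (gaussianReal 0 1) := by
    rw [(indepFun_iff_map_prod_eq_prod_map_map hγ₁.aemeasurable hγ₂.aemeasurable).1 hind, h₁, h₂]
  have hset : {ω | 0 < γ₁ ω ∧ 0 < ρ * γ₁ ω + √(1 - ρ ^ 2) * γ₂ ω} =
      (fun ω ↦ (γ₁ ω, γ₂ ω)) ⁻¹' wedge (arccos ρ) := by
    rw [wedge, cos_arccos hρ.1 hρ.2, sin_arccos]
    rfl
  calc (P {ω | 0 < γ₁ ω ∧ 0 < ρ * γ₁ ω + √(1 - ρ ^ 2) * γ₂ ω}).toReal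
      = ((gaussianReal 0 1).prod (gaussianReal 0 1)).real (wedge (arccos ρ)) := by
        rw [hset, ← hlaw, measureReal_def,
          Measure.map_apply (hγ₁.prodMk hγ₂) (measurableSet_wedge _)]
    _ = (π - arccos ρ) / (2 * π) :=
        measureReal_gaussianReal_prod_wedge one_ne_zero ⟨arccos_nonneg ρ, arccos_le_pi ρ⟩
    _ = 1 / 4 + arcsin ρ / (2 * π) := by
        rw [arccos_eq_pi_div_two_sub_arcsin]
        field_simp
        ring
end
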